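/- Under assumptions (A1) and (A2) (f, r, q bounded and Lipschitz continuous), the Q-function Q : ℝ^n × ℝ^m × [0,T] → ℝ is Lipschitz continuous, i.e., there exists a constant L such that |Q(x, u, t) − Q(x', u', t')| ≤ L(|x − x'| + |u − u'| + |t − t'|) for all (x, u, t), (x', u', t') ∈ ℝ^n × ℝ^m × [0,T]. -/

import Mathlib

open MeasureTheory Set

noncomputable section

/-- Carathéodory solution of `ẋ(s) = f(x(s), u(s))` on `[t, T]`:
`x s = x t + ∫_t^s f(x(τ), u(τ)) dτ` (with the integrand interval integrable). -/
def IsTrajectory {n m : ℕ}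
    (f : EuclideanSpace ℝ (Fin n) → EuclideanSpace ℝ (Fin m) → EuclideanSpace ℝ (Fin n))
    (t T : ℝ) (x : ℝ → EuclideanSpace ℝ (Fin n)) (u : ℝ → EuclideanSpace ℝ (Fin m)) : Prop :=
  ∀ s ∈ Set.Icc t T,
    IntervalIntegrable (fun τ => f (x τ) (u τ)) MeasureTheory.volume t s ∧
      x s = x t + ∫ τ in t..s, f (x τ) (u τ)

/-- The total cost `∫_t^T r(x(s), u(s)) ds + q(x(T))`. -/
def cost {n m : ℕ}
    (r : EuclideanSpace ℝ (Fin n) → EuclideanSpace ℝ (Fin m) → ℝ)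
    (q : EuclideanSpace ℝ (Fin n) → ℝ) (t T : ℝ)
    (x : ℝ → EuclideanSpace ℝ (Fin n)) (u : ℝ → EuclideanSpace ℝ (Fin m)) : ℝ :=
  (∫ s in t..T, r (x s) (u s)) + q (x T)

/-- Admissible controls `𝕌₁`: Lipschitz continuous on `[0, T]` with
Lipschitz constant (equivalently, `‖u̇‖_{L^∞}` bound) `M`. -/
def Adm {m : ℕ} (M T : ℝ) (u : ℝ → EuclideanSpace ℝ (Fin m)) : Prop :=
  LipschitzOnWith (Real.toNNReal M) u (Set.Icc 0 T)

/-- The Q-function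
`Q(x₀,u₀,t) = inf { ∫_t^T r(x(s),u(s)) ds + q(x(T)) : u ∈ 𝕌₁, x(t) = x₀, u(t) = u₀ }`. -/
def Qfun {n m : ℕ}
    (f : EuclideanSpace ℝ (Fin n) → EuclideanSpace ℝ (Fin m) → EuclideanSpace ℝ (Fin n))
    (r : EuclideanSpace ℝ (Fin n) → EuclideanSpace ℝ (Fin m) → ℝ)
    (q : EuclideanSpace ℝ (Fin n) → ℝ) (M T : ℝ)
    (x₀ : EuclideanSpace ℝ (Fin n)) (u₀ : EuclideanSpace ℝ (Fin m)) (t : ℝ) : ℝ :=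
  sInf { c : ℝ | ∃ x u, Adm M T u ∧ IsTrajectory f t T x u ∧
      x t = x₀ ∧ u t = u₀ ∧ c = cost r q t T x u }

/-!
Write `d = ‖x₀ - x₀'‖ + ‖u₀ - u₀'‖ + (t' - t)` for `t ≤ t'`. An admissible pair starting from
`(x₀', u₀')` at time `t'` is matched from `(x₀, u₀)` at the earlier time `t`: hold the control at
`u₀` until `t'`, then follow the old control translated by `u₀ - u₀'`, which keeps it
`M`-Lipschitz. On `[t', T]` Grönwall's inequality keeps the two trajectories `O(d)` apart, the
Lipschitz bounds on `r` and `q` transfer this to the costs, and the stretch `[t, t']` costs at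
most `Cr (t' - t)`. Conversely, delaying an admissible pair from `t` to `t'` amounts to truncating
its horizon by `t' - t`, which changes its cost by at most `(Cr + Kq Cf) (t' - t)`. Taking infima,
`Q(x₀, u₀, t) ≤ Q(x₀', u₀', t') + L d` and
`Q(x₀', u₀', t') ≤ Q(x₀, u₀, t') + L d ≤ Q(x₀, u₀, t) + L d + C (t' - t)`.
-/

open Filter Topology intervalIntegral

theorem csInf_le_csInf_add {S S' : Set ℝ} (hS : BddBelow S) (hS' : S'.Nonempty) {D : ℝ}
    (h : ∀ c ∈ S', ∃ d ∈ S, d ≤ c + D) : sInf S ≤ sInf S' + D := by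
  rw [← sub_le_iff_le_add]
  refine le_csInf hS' fun c hc => ?_
  obtain ⟨d, hd, hdc⟩ := h c hc
  linarith [csInf_le hS hd]

theorem gronwallBound_le_mul_exp {δ K ε : ℝ} (hK : 0 ≤ K) (hε : 0 ≤ ε) (x : ℝ) :
    gronwallBound δ K ε x ≤ (δ + ε * x) * Real.exp (K * x) := by
  rcases hK.eq_or_lt with rfl | hK
  · simp [gronwallBound_K0]
  rw [gronwallBound_of_K_ne_0 hK.ne']
  -- `exp y - 1 ≤ y exp y` is `1 - y ≤ exp (-y)` multiplied by `exp y`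
  have hexp : Real.exp (K * x) - 1 ≤ K * x * Real.exp (K * x) := by
    have := mul_le_mul_of_nonneg_right (Real.one_sub_le_exp_neg (K * x)) (Real.exp_pos (K * x)).le
    rw [← Real.exp_add, neg_add_cancel, Real.exp_zero] at this
    linarith
  calc δ * Real.exp (K * x) + ε / K * (Real.exp (K * x) - 1)
      ≤ δ * Real.exp (K * x) + ε / K * (K * x * Real.exp (K * x)) := by gcongr
    _ = (δ + ε * x) * Real.exp (K * x) := by field_simp

theorem abs_intervalIntegral_le_mul_sub {g : ℝ → ℝ} {a b C : ℝ} (hab : a ≤ b)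
    (hg : ∀ s ∈ Ioc a b, |g s| ≤ C) : |∫ s in a..b, g s| ≤ C * (b - a) := by
  have := norm_integral_le_of_norm_le_const (f := g) (C := C) fun s hs =>
    hg s (by rwa [uIoc_of_le hab] at hs)
  rwa [Real.norm_eq_abs, abs_of_nonneg (sub_nonneg.2 hab)] at this

section

variable {α β γ : Type*} [PseudoEMetricSpace α] [PseudoEMetricSpace β] [PseudoEMetricSpace γ]
  {g : α → β → γ} {K : NNReal}

theorem LipschitzWith.of_uncurry_left (hg : LipschitzWith K (Function.uncurry g)) (b : β) :
    LipschitzWith K fun a => g a b := by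
  have := hg.comp (LipschitzWith.prodMk_right b)
  rwa [mul_one] at this

theorem LipschitzWith.of_uncurry_right (hg : LipschitzWith K (Function.uncurry g)) (a : α) :
    LipschitzWith K (g a) := by
  have := hg.comp (LipschitzWith.prodMk_left a)
  rwa [mul_one] at this

end

def costSet {n m : ℕ}
    (f : EuclideanSpace ℝ (Fin n) → EuclideanSpace ℝ (Fin m) → EuclideanSpace ℝ (Fin n))
    (r : EuclideanSpace ℝ (Fin n) → EuclideanSpace ℝ (Fin m) → ℝ)
    (q : EuclideanSpace ℝ (Fin n) → ℝ) (M T : ℝ)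
    (x₀ : EuclideanSpace ℝ (Fin n)) (u₀ : EuclideanSpace ℝ (Fin m)) (t : ℝ) : Set ℝ :=
  { c : ℝ | ∃ x u, Adm M T u ∧ IsTrajectory f t T x u ∧
      x t = x₀ ∧ u t = u₀ ∧ c = cost r q t T x u }

section

variable {n m : ℕ}
  {f : EuclideanSpace ℝ (Fin n) → EuclideanSpace ℝ (Fin m) → EuclideanSpace ℝ (Fin n)}
  {r : EuclideanSpace ℝ (Fin n) → EuclideanSpace ℝ (Fin m) → ℝ}
  {q : EuclideanSpace ℝ (Fin n) → ℝ}
  {x y : ℝ → EuclideanSpace ℝ (Fin n)} {u v w : ℝ → EuclideanSpace ℝ (Fin m)}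
  {M T T' t t' s s' Cf Cr Cq G η : ℝ} {Kf Kr Kq : NNReal}

theorem adm_const (M T : ℝ) (c : EuclideanSpace ℝ (Fin m)) : Adm M T fun _ => c :=
  ((LipschitzWith.const c).weaken zero_le).lipschitzOnWith

theorem Adm.continuousOn (hu : Adm M T u) : ContinuousOn u (Icc 0 T) :=
  LipschitzOnWith.continuousOn hu

theorem Adm.comp {φ : ℝ → ℝ} (hu : Adm M T u) (hφ : LipschitzWith 1 φ)
    (hmaps : MapsTo φ (Icc 0 T) (Icc 0 T)) : Adm M T (u ∘ φ) := by
  simpa only [Adm, mul_one] using LipschitzOnWith.comp hu hφ.lipschitzOnWith hmaps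

theorem Adm.add_const (hu : Adm M T u) (c : EuclideanSpace ℝ (Fin m)) :
    Adm M T fun s => u s + c := by
  simpa only [Adm, one_mul, Function.comp_def] using
    (isometry_add_right c).lipschitz.comp_lipschitzOnWith hu

namespace IsTrajectory

theorem continuousOn (hx : IsTrajectory f t T x u) (htT : t ≤ T) :
    ContinuousOn x (Icc t T) := by
  have hprim := continuousOn_primitive_interval' (hx T ⟨htT, le_rfl⟩).1 left_mem_uIcc
  rw [uIcc_of_le htT] at hprim
  exact (continuousOn_const.add hprim).congr fun s hs => (hx s hs).2

theorem dist_le (hfb : ∀ y v, ‖f y v‖ ≤ Cf) (hx : IsTrajectory f t T x u)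
    (hs : s ∈ Icc t T) (hs' : s' ∈ Icc t T) : dist (x s) (x s') ≤ Cf * |s - s'| := by
  have hsub : x s' - x s = ∫ τ in s..s', f (x τ) (u τ) := by
    rw [(hx s hs).2, (hx s' hs').2, ← integral_interval_sub_left (hx s' hs').1 (hx s hs).1]
    abel
  rw [dist_eq_norm', hsub, abs_sub_comm]
  exact norm_integral_le_of_norm_le_const fun τ _ => hfb _ _

theorem continuousOn_comp {E : Type*} [TopologicalSpace E]
    {g : EuclideanSpace ℝ (Fin n) → EuclideanSpace ℝ (Fin m) → E}
    (hg : Continuous (Function.uncurry g)) (hx : IsTrajectory f t T x u) (htT : t ≤ T)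
    (hu : ContinuousOn u (Icc t T)) : ContinuousOn (fun s => g (x s) (u s)) (Icc t T) :=
  hg.comp_continuousOn ((hx.continuousOn htT).prodMk hu)

theorem hasDerivWithinAt (hf : Continuous (Function.uncurry f)) (hx : IsTrajectory f t T x u)
    (hu : ContinuousOn u (Icc t T)) (hs : s ∈ Ico t T) :
    HasDerivWithinAt x (f (x s) (u s)) (Ici s) s := by
  have hsT : s ∈ Icc t T := Ico_subset_Icc_self hs
  have hF := hx.continuousOn_comp hf (hsT.1.trans hsT.2) hu
  have hnhds : Icc t T ∈ 𝓝[Ici s] s :=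
    mem_of_superset (Icc_mem_nhdsGE hs.2) (Icc_subset_Icc_left hs.1)
  have hnhds' : Icc t T ∈ 𝓝[Ioi s] s := nhdsWithin_mono s Ioi_subset_Ici_self hnhds
  have hprim :
      HasDerivWithinAt (fun b => ∫ τ in t..b, f (x τ) (u τ)) (f (x s) (u s)) (Ici s) s :=
    integral_hasDerivWithinAt_right (hx s hsT).1
      ⟨Icc t T, hnhds', hF.aestronglyMeasurable measurableSet_Icc⟩
      ((hF s hsT).mono_of_mem_nhdsWithin hnhds')
  refine (hprim.const_add (x t)).congr_of_eventuallyEq ?_ (hx s hsT).2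
  filter_upwards [hnhds] with τ hτ using (hx τ hτ).2

theorem mono_left (hx : IsTrajectory f t T x u) (ht' : t' ∈ Icc t T) :
    IsTrajectory f t' T x u := by
  intro s hs
  have hs' : s ∈ Icc t T := ⟨ht'.1.trans hs.1, hs.2⟩
  have hint := (hx t' ht').1.symm.trans (hx s hs').1
  refine ⟨hint, ?_⟩
  rw [(hx s hs').2, (hx t' ht').2, add_assoc,
    ← integral_add_adjacent_intervals (hx t' ht').1 hint]

theorem comp_sub (hx : IsTrajectory f t T x u) (htt' : t ≤ t')
    (hw : ∀ s ∈ Icc t' T, w s = u (s - (t' - t))) :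
    IsTrajectory f t' T (fun s => x (s - (t' - t))) w := by
  intro s hs
  have hs' : s - (t' - t) ∈ Icc t T := ⟨by linarith [hs.1], by linarith [hs.2]⟩
  have hcongr : EqOn (fun τ => f (x (τ - (t' - t))) (u (τ - (t' - t))))
      (fun τ => f (x (τ - (t' - t))) (w τ)) (uIcc t' s) := fun τ hτ => by
    rw [uIcc_of_le hs.1] at hτ
    simp only [hw τ ⟨hτ.1, hτ.2.trans hs.2⟩]
  obtain ⟨hint, heq⟩ := hx _ hs'
  have hint' := hint.comp_sub_right (t' - t)
  rw [add_sub_cancel, sub_add_cancel] at hint'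
  refine ⟨hint'.congr (hcongr.mono uIoc_subset_uIcc), ?_⟩
  rw [← integral_congr hcongr, integral_comp_sub_right (fun τ => f (x τ) (u τ)),
    sub_sub_cancel]
  simpa only [sub_sub_cancel] using heq

end IsTrajectory

theorem isTrajectory_of_hasDerivWithinAt
    (hx : ∀ s ∈ Icc t T, HasDerivWithinAt x (f (x s) (u s)) (Icc t T) s)
    (hF : ContinuousOn (fun s => f (x s) (u s)) (Icc t T)) : IsTrajectory f t T x u := by
  intro s hs
  have hint : IntervalIntegrable (fun τ => f (x τ) (u τ)) volume t s :=
    (hF.mono (Icc_subset_Icc_right hs.2)).intervalIntegrable_of_Icc hs.1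
  refine ⟨hint, ?_⟩
  rw [integral_eq_sub_of_hasDeriv_right_of_le hs.1
    (fun τ hτ => (hx τ (Icc_subset_Icc_right hs.2 hτ)).continuousWithinAt.mono
      (Icc_subset_Icc_right hs.2))
    (fun τ hτ => ((hx τ ⟨hτ.1.le, hτ.2.le.trans hs.2⟩).hasDerivAt
      (Icc_mem_nhds hτ.1 (hτ.2.trans_le hs.2))).hasDerivWithinAt) hint]
  abel

theorem exists_isTrajectory (hfb : ∀ y v, ‖f y v‖ ≤ Cf)
    (hfl : LipschitzWith Kf (Function.uncurry f)) (htT : t ≤ T) (hu : ContinuousOn u (Icc t T))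
    (x₀ : EuclideanSpace ℝ (Fin n)) : ∃ x, IsTrajectory f t T x u ∧ x t = x₀ := by
  have hCf : 0 ≤ Cf := (norm_nonneg _).trans (hfb 0 0)
  have hpl : IsPicardLindelof (fun s y => f y (u s)) (⟨t, left_mem_Icc.2 htT⟩ : Icc t T) x₀
      (Real.toNNReal (Cf * (T - t))) 0 (Real.toNNReal Cf) Kf :=
    { lipschitzOnWith := fun s _ => (hfl.of_uncurry_left (u s)).lipschitzOnWith
      continuousOn := fun y _ => hfl.continuous.comp_continuousOn (continuousOn_const.prodMk hu)
      norm_le := fun s _ y _ => (hfb y (u s)).trans (Real.le_coe_toNNReal Cf)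
      mul_max_le := by
        simp [Real.coe_toNNReal _ hCf, Real.coe_toNNReal _ (mul_nonneg hCf (sub_nonneg.2 htT)),
          sub_nonneg.2 htT] }
  obtain ⟨x, hx₀, hx⟩ := IsPicardLindelof.exists_eq_forall_mem_Icc_hasDerivWithinAt₀ hpl
  refine ⟨x, isTrajectory_of_hasDerivWithinAt hx ?_, hx₀⟩
  exact hfl.continuous.comp_continuousOn
    (ContinuousOn.prodMk (fun s hs => (hx s hs).continuousWithinAt) hu)

theorem IsTrajectory.dist_le_of_dist_control_le (hfl : LipschitzWith Kf (Function.uncurry f))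
    (hx : IsTrajectory f t T x u) (hy : IsTrajectory f t T y v)
    (hu : ContinuousOn u (Icc t T)) (hv : ContinuousOn v (Icc t T))
    (huv : ∀ s ∈ Icc t T, dist (u s) (v s) ≤ η) (hs : s ∈ Icc t T) :
    dist (x s) (y s) ≤ (dist (x t) (y t) + Kf * η * (T - t)) * Real.exp (Kf * (T - t)) := by
  have htT : t ≤ T := hs.1.trans hs.2
  have hη : 0 ≤ η := dist_nonneg.trans (huv s hs)
  have hgron := dist_le_of_approx_trajectories_ODE (v := fun σ z => f z (u σ))
    (f' := fun σ => f (x σ) (u σ)) (g' := fun σ => f (y σ) (v σ)) (εf := 0) (εg := Kf * η)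
    (fun σ => hfl.of_uncurry_left (u σ)) (hx.continuousOn htT)
    (fun σ hσ => hx.hasDerivWithinAt hfl.continuous hu hσ) (fun σ _ => by simp)
    (hy.continuousOn htT) (fun σ hσ => hy.hasDerivWithinAt hfl.continuous hv hσ)
    (fun σ hσ => ((hfl.of_uncurry_right (y σ)).dist_le_mul _ _).trans
      (by gcongr; exact (dist_comm _ _).trans_le (huv σ (Ico_subset_Icc_self hσ))))
    le_rfl s hs
  rw [zero_add] at hgron
  calc dist (x s) (y s) ≤ gronwallBound (dist (x t) (y t)) Kf (Kf * η) (s - t) := hgron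
    _ ≤ gronwallBound (dist (x t) (y t)) Kf (Kf * η) (T - t) :=
      gronwallBound_mono dist_nonneg (by positivity) Kf.coe_nonneg (by linarith [hs.2])
    _ ≤ _ := gronwallBound_le_mul_exp Kf.coe_nonneg (by positivity) _

theorem cost_le_cost_add (hrl : LipschitzWith Kr (Function.uncurry r))
    (hql : LipschitzWith Kq q) (htT : t ≤ T)
    (hxu : IntervalIntegrable (fun s => r (x s) (u s)) volume t T)
    (hyv : IntervalIntegrable (fun s => r (y s) (v s)) volume t T)
    (hxy : ∀ s ∈ Icc t T, dist (x s) (y s) ≤ G)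
    (huv : ∀ s ∈ Icc t T, dist (u s) (v s) ≤ η) :
    cost r q t T x u ≤ cost r q t T y v + Kr * (G + η) * (T - t) + Kq * G := by
  have hr : |(∫ s in t..T, r (x s) (u s)) - ∫ s in t..T, r (y s) (v s)|
      ≤ Kr * (G + η) * (T - t) := by
    rw [← integral_sub hxu hyv]
    refine abs_intervalIntegral_le_mul_sub htT fun s hs => ?_
    have hs : s ∈ Icc t T := Ioc_subset_Icc_self hs
    have hpair : dist (x s, u s) (y s, v s) ≤ G + η := by
      rw [Prod.dist_eq]
      exact max_le (le_add_of_le_of_nonneg (hxy s hs) (dist_nonneg.trans (huv s hs)))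
        (le_add_of_nonneg_of_le (dist_nonneg.trans (hxy s hs)) (huv s hs))
    rw [← Real.dist_eq]
    exact (hrl.dist_le_mul (x s, u s) (y s, v s)).trans (by gcongr)
  have hq : |q (x T) - q (y T)| ≤ Kq * G := by
    rw [← Real.dist_eq]
    exact (hql.dist_le_mul _ _).trans (by gcongr; exact hxy T ⟨htT, le_rfl⟩)
  rw [cost, cost]
  linarith [(abs_le.1 hr).2, (abs_le.1 hq).2]

theorem cost_eq_integral_add_cost (hint : IntervalIntegrable (fun s => r (x s) (u s)) volume t T)
    (ht' : t' ∈ Icc t T) :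
    cost r q t T x u = (∫ s in t..t', r (x s) (u s)) + cost r q t' T x u := by
  rw [cost, cost, ← add_assoc, integral_add_adjacent_intervals
    (hint.mono_set (uIcc_subset_uIcc left_mem_uIcc (Icc_subset_uIcc ht')))
    (hint.mono_set (uIcc_subset_uIcc (Icc_subset_uIcc ht') right_mem_uIcc))]

theorem cost_comp_sub (δ : ℝ) (hw : ∀ s ∈ uIcc t T, w s = u (s - δ)) :
    cost r q t T (fun s => x (s - δ)) w = cost r q (t - δ) (T - δ) x u := by
  rw [cost, cost, integral_congr (g := fun s => r (x (s - δ)) (u (s - δ)))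
    fun s hs => by simp only [hw s hs], integral_comp_sub_right (fun s => r (x s) (u s))]

theorem IsTrajectory.cost_le_cost_add_of_horizon_le (hfb : ∀ y v, ‖f y v‖ ≤ Cf)
    (hrb : ∀ y v, |r y v| ≤ Cr) (hql : LipschitzWith Kq q) (hx : IsTrajectory f t T x u)
    (hint : IntervalIntegrable (fun s => r (x s) (u s)) volume t T) (hT' : T' ∈ Icc t T) :
    cost r q t T' x u ≤ cost r q t T x u + (Cr + Kq * Cf) * (T - T') := by
  have htT : t ≤ T := hT'.1.trans hT'.2
  have hsplit := cost_eq_integral_add_cost (q := q) hint hT'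
  have hr : |∫ s in T'..T, r (x s) (u s)| ≤ Cr * (T - T') :=
    abs_intervalIntegral_le_mul_sub hT'.2 fun s _ => hrb _ _
  have hq : |q (x T') - q (x T)| ≤ Kq * (Cf * (T - T')) := by
    rw [← Real.dist_eq]
    refine (hql.dist_le_mul _ _).trans ?_
    have := hx.dist_le hfb hT' ⟨htT, le_rfl⟩
    rw [abs_of_nonpos (sub_nonpos.2 hT'.2), neg_sub] at this
    gcongr
  rw [cost, cost, ← integral_add_adjacent_intervals
    (hint.mono_set (uIcc_subset_uIcc left_mem_uIcc (Icc_subset_uIcc hT')))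
    (hint.mono_set (uIcc_subset_uIcc (Icc_subset_uIcc hT') right_mem_uIcc))]
  linarith [(abs_le.1 hr).1, (abs_le.1 hq).2]

theorem costSet_nonempty (hfb : ∀ y v, ‖f y v‖ ≤ Cf)
    (hfl : LipschitzWith Kf (Function.uncurry f)) (htT : t ≤ T)
    (x₀ : EuclideanSpace ℝ (Fin n)) (u₀ : EuclideanSpace ℝ (Fin m)) :
    (costSet f r q M T x₀ u₀ t).Nonempty := by
  obtain ⟨x, hx, hx₀⟩ :=
    exists_isTrajectory hfb hfl htT (u := fun _ => u₀) continuousOn_const x₀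
  exact ⟨_, x, _, adm_const M T u₀, hx, hx₀, rfl, rfl⟩

theorem costSet_bddBelow (hrb : ∀ y v, |r y v| ≤ Cr) (hqb : ∀ y, |q y| ≤ Cq)
    {x₀ : EuclideanSpace ℝ (Fin n)} {u₀ : EuclideanSpace ℝ (Fin m)} :
    BddBelow (costSet f r q M T x₀ u₀ t) := by
  refine ⟨-(Cr * |T - t| + Cq), ?_⟩
  rintro _ ⟨x, u, -, -, -, -, rfl⟩
  have hr := norm_integral_le_of_norm_le_const (a := t) (b := T)
    (f := fun s => r (x s) (u s)) fun s _ => (Real.norm_eq_abs _).trans_le (hrb _ _)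
  rw [Real.norm_eq_abs] at hr
  rw [cost]
  linarith [(abs_le.1 hr).1, (abs_le.1 (hqb (x T))).1]

theorem IsTrajectory.cost_le_cost_add_of_start_le (hfb : ∀ y v, ‖f y v‖ ≤ Cf)
    (hrb : ∀ y v, |r y v| ≤ Cr) (hfl : LipschitzWith Kf (Function.uncurry f))
    (hrl : LipschitzWith Kr (Function.uncurry r)) (hql : LipschitzWith Kq q)
    (hy : IsTrajectory f t T y v) (hx : IsTrajectory f t' T x u)
    (hv : ContinuousOn v (Icc t T)) (hu : ContinuousOn u (Icc t' T)) (ht' : t' ∈ Icc t T)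
    (hvu : ∀ s ∈ Icc t' T, dist (v s) (u s) ≤ η)
    (hG : (dist (y t) (x t') + Cf * (t' - t) + Kf * η * (T - t')) * Real.exp (Kf * (T - t'))
      ≤ G) :
    cost r q t T y v ≤ cost r q t' T x u + Cr * (t' - t) + Kr * (G + η) * (T - t') + Kq * G := by
  have htT : t ≤ T := ht'.1.trans ht'.2
  have hgap : dist (y t') (x t') ≤ dist (y t) (x t') + Cf * (t' - t) := by
    have hyy := hy.dist_le hfb ht' ⟨le_rfl, htT⟩
    rw [abs_of_nonneg (sub_nonneg.2 ht'.1)] at hyy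
    linarith [dist_triangle (y t') (y t) (x t')]
  have hyx : ∀ s ∈ Icc t' T, dist (y s) (x s) ≤ G := fun s hs =>
    ((hy.mono_left ht').dist_le_of_dist_control_le hfl hx (hv.mono (Icc_subset_Icc_left ht'.1))
      hu hvu hs).trans (le_trans (by gcongr) hG)
  have hint_y : IntervalIntegrable (fun s => r (y s) (v s)) volume t T :=
    (hy.continuousOn_comp hrl.continuous htT hv).intervalIntegrable_of_Icc htT
  have hint_x : IntervalIntegrable (fun s => r (x s) (u s)) volume t' T :=
    (hx.continuousOn_comp hrl.continuous ht'.2 hu).intervalIntegrable_of_Icc ht'.2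
  have hr : |∫ s in t..t', r (y s) (v s)| ≤ Cr * (t' - t) :=
    abs_intervalIntegral_le_mul_sub ht'.1 fun s _ => hrb _ _
  have hcost := cost_le_cost_add hrl hql ht'.2
    (hint_y.mono_set (uIcc_subset_uIcc (Icc_subset_uIcc ht') right_mem_uIcc)) hint_x hyx hvu
  rw [cost_eq_integral_add_cost hint_y ht']
  linarith [(abs_le.1 hr).2]

theorem Qfun_le_Qfun_add_mul_dist (hfb : ∀ y v, ‖f y v‖ ≤ Cf)
    (hrb : ∀ y v, |r y v| ≤ Cr) (hqb : ∀ y, |q y| ≤ Cq)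
    (hfl : LipschitzWith Kf (Function.uncurry f))
    (hrl : LipschitzWith Kr (Function.uncurry r)) (hql : LipschitzWith Kq q)
    (h0t : 0 ≤ t) (htt' : t ≤ t') (ht'T : t' ≤ T)
    (x₀ x₀' : EuclideanSpace ℝ (Fin n)) (u₀ u₀' : EuclideanSpace ℝ (Fin m)) :
    Qfun f r q M T x₀ u₀ t ≤ Qfun f r q M T x₀' u₀' t' +
      (Cr + Kr * T + (Kr * T + Kq) * ((1 + Cf + Kf * T) * Real.exp (Kf * T))) *
        (‖x₀ - x₀'‖ + ‖u₀ - u₀'‖ + (t' - t)) := by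
  have htT : t ≤ T := htt'.trans ht'T
  have hCf : 0 ≤ Cf := (norm_nonneg _).trans (hfb 0 0)
  have hCr : 0 ≤ Cr := (abs_nonneg _).trans (hrb 0 0)
  refine csInf_le_csInf_add (costSet_bddBelow hrb hqb)
    (costSet_nonempty hfb hfl ht'T x₀' u₀') ?_
  rintro _ ⟨x, u, hu, hx, rfl, rfl, rfl⟩
  set v := fun s => u (max s t') + (u₀ - u t')
  have hv : Adm M T v := (hu.comp (LipschitzWith.id.max_const t') fun s hs =>
    ⟨(h0t.trans htt').trans (le_max_right _ _), max_le hs.2 ht'T⟩).add_const _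
  have hvc : ContinuousOn v (Icc t T) := hv.continuousOn.mono (Icc_subset_Icc_left h0t)
  obtain ⟨y, hy, hyt⟩ := exists_isTrajectory hfb hfl htT hvc x₀
  refine ⟨_, ⟨y, v, hv, hy, hyt, by simp [v, max_eq_right htt'], rfl⟩, ?_⟩
  set a := ‖x₀ - x t'‖
  set b := ‖u₀ - u t'‖
  set d := a + b + (t' - t)
  have had : a ≤ d := by linarith [norm_nonneg (u₀ - u t')]
  have hbd : b ≤ d := by linarith [norm_nonneg (x₀ - x t')]
  have hδd : t' - t ≤ d := by linarith [norm_nonneg (x₀ - x t'), norm_nonneg (u₀ - u t')]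
  have hd : 0 ≤ d := (norm_nonneg _).trans hbd
  set P := (1 + Cf + Kf * T) * Real.exp (Kf * T)
  have hP₁ : 0 ≤ 1 + Cf + Kf * T := by nlinarith [Kf.coe_nonneg]
  have hG : (dist (y t) (x t') + Cf * (t' - t) + Kf * b * (T - t')) * Real.exp (Kf * (T - t'))
      ≤ P * d := by
    have hbT : Kf * (b * (T - t')) ≤ Kf * (d * T) :=
      mul_le_mul_of_nonneg_left (mul_le_mul hbd (by linarith) (by linarith) hd) Kf.coe_nonneg
    have hCfδ : Cf * (t' - t) ≤ Cf * d := by gcongr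
    rw [hyt, dist_eq_norm]
    calc _ ≤ (1 + Cf + Kf * T) * d * Real.exp (Kf * T) := by
          gcongr
          · linarith
          · linarith
      _ = P * d := by ring
  have hcost := hy.cost_le_cost_add_of_start_le hfb hrb hfl hrl hql hx hvc
    (hu.continuousOn.mono (Icc_subset_Icc_left (h0t.trans htt'))) ⟨htt', ht'T⟩
    (fun s hs => by simp [v, b, max_eq_left hs.1, dist_eq_norm]) hG
  have hP : 0 ≤ P := mul_nonneg hP₁ (Real.exp_pos _).le
  have h₁ : Cr * (t' - t) ≤ Cr * d := by gcongr
  have h₂ : Kr * (P * d + b) * (T - t') ≤ Kr * (P * d + d) * T := by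
    gcongr
    linarith
  linarith

theorem Qfun_delay_le_add (hfb : ∀ y v, ‖f y v‖ ≤ Cf) (hrb : ∀ y v, |r y v| ≤ Cr)
    (hqb : ∀ y, |q y| ≤ Cq) (hfl : LipschitzWith Kf (Function.uncurry f))
    (hr : Continuous (Function.uncurry r)) (hql : LipschitzWith Kq q)
    (h0t : 0 ≤ t) (htt' : t ≤ t') (ht'T : t' ≤ T)
    (x₀ : EuclideanSpace ℝ (Fin n)) (u₀ : EuclideanSpace ℝ (Fin m)) :
    Qfun f r q M T x₀ u₀ t' ≤ Qfun f r q M T x₀ u₀ t + (Cr + Kq * Cf) * (t' - t) := by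
  have htT : t ≤ T := htt'.trans ht'T
  refine csInf_le_csInf_add (costSet_bddBelow hrb hqb) (costSet_nonempty hfb hfl htT x₀ u₀) ?_
  rintro _ ⟨x, u, hu, hx, rfl, rfl, rfl⟩
  -- Frozen before `t'` so that the delayed control is still `M`-Lipschitz on all of `[0, T]`.
  set w := fun s => u (max (s - (t' - t)) t)
  have hw : Adm M T w :=
    hu.comp ((LipschitzWith.of_dist_le_mul fun a b => by simp [Real.dist_eq]).max_const t)
      fun s hs => ⟨h0t.trans (le_max_right _ _), max_le (by linarith [hs.2]) htT⟩
  have hwu : ∀ s ∈ Icc t' T, w s = u (s - (t' - t)) := fun s hs => by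
    simp only [w, max_eq_left (show t ≤ s - (t' - t) by linarith [hs.1])]
  have hint : IntervalIntegrable (fun s => r (x s) (u s)) volume t T :=
    ContinuousOn.intervalIntegrable_of_Icc htT
      (hx.continuousOn_comp hr htT (hu.continuousOn.mono (Icc_subset_Icc_left h0t)))
  refine ⟨_, ⟨_, w, hw, hx.comp_sub htt' hwu, by simp, by simp [w], rfl⟩, ?_⟩
  rw [cost_comp_sub _ (by rwa [uIcc_of_le ht'T]), sub_sub_cancel]
  have := hx.cost_le_cost_add_of_horizon_le hfb hrb hql hint (T' := T - (t' - t))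
    ⟨by linarith, by linarith⟩
  rwa [sub_sub_cancel] at this

theorem abs_Qfun_sub_Qfun_le (hfb : ∀ y v, ‖f y v‖ ≤ Cf) (hrb : ∀ y v, |r y v| ≤ Cr)
    (hqb : ∀ y, |q y| ≤ Cq) (hfl : LipschitzWith Kf (Function.uncurry f))
    (hrl : LipschitzWith Kr (Function.uncurry r)) (hql : LipschitzWith Kq q)
    (h0t : 0 ≤ t) (htt' : t ≤ t') (ht'T : t' ≤ T)
    (x₀ x₀' : EuclideanSpace ℝ (Fin n)) (u₀ u₀' : EuclideanSpace ℝ (Fin m)) :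
    |Qfun f r q M T x₀ u₀ t - Qfun f r q M T x₀' u₀' t'| ≤
      (Cr + Kr * T + (Kr * T + Kq) * ((1 + Cf + Kf * T) * Real.exp (Kf * T)) + (Cr + Kq * Cf)) *
        (‖x₀ - x₀'‖ + ‖u₀ - u₀'‖ + |t - t'|) := by
  have hT : 0 ≤ T := (h0t.trans htt').trans ht'T
  have hCf : 0 ≤ Cf := (norm_nonneg _).trans (hfb 0 0)
  have hCr : 0 ≤ Cr := (abs_nonneg _).trans (hrb 0 0)
  set L := Cr + Kr * T + (Kr * T + Kq) * ((1 + Cf + Kf * T) * Real.exp (Kf * T))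
  set C := Cr + Kq * Cf
  have hL : 0 ≤ L := by
    have hP := mul_nonneg (by nlinarith [Kf.coe_nonneg] : 0 ≤ 1 + Cf + Kf * T)
      (Real.exp_pos (Kf * T)).le
    nlinarith [mul_nonneg Kr.coe_nonneg hT, Kq.coe_nonneg]
  have hC : 0 ≤ C := add_nonneg hCr (mul_nonneg Kq.coe_nonneg hCf)
  have hearly := Qfun_le_Qfun_add_mul_dist (M := M) hfb hrb hqb hfl hrl hql h0t htt' ht'T
    x₀ x₀' u₀ u₀'
  have hswap := Qfun_le_Qfun_add_mul_dist (M := M) hfb hrb hqb hfl hrl hql (h0t.trans htt')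
    le_rfl ht'T x₀' x₀ u₀' u₀
  have hdelay := Qfun_delay_le_add (M := M) hfb hrb hqb hfl hrl.continuous hql h0t htt' ht'T
    x₀ u₀
  rw [norm_sub_rev x₀', norm_sub_rev u₀', sub_self, add_zero] at hswap
  rw [abs_sub_comm t, abs_of_nonneg (sub_nonneg.2 htt'), abs_sub_le_iff]
  set d := ‖x₀ - x₀'‖ + ‖u₀ - u₀'‖ + (t' - t)
  have hδd : 0 ≤ t' - t ∧ t' - t ≤ d := by
    constructor <;> linarith [norm_nonneg (x₀ - x₀'), norm_nonneg (u₀ - u₀')]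
  have h₁ : L * (‖x₀ - x₀'‖ + ‖u₀ - u₀'‖) ≤ L * d := by gcongr; linarith
  have h₂ : C * (t' - t) ≤ C * d := by gcongr; exact hδd.2
  have h₃ : 0 ≤ C * d := mul_nonneg hC (hδd.1.trans hδd.2)
  constructor <;> linarith

end

theorem Qfun_lipschitz_general {n m : ℕ}
    (f : EuclideanSpace ℝ (Fin n) → EuclideanSpace ℝ (Fin m) → EuclideanSpace ℝ (Fin n))
    (r : EuclideanSpace ℝ (Fin n) → EuclideanSpace ℝ (Fin m) → ℝ)
    (q : EuclideanSpace ℝ (Fin n) → ℝ) (M T : ℝ)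
    (Cf Cr Cq : ℝ)
    (hfb : ∀ x u, ‖f x u‖ ≤ Cf) (hrb : ∀ x u, |r x u| ≤ Cr) (hqb : ∀ x, |q x| ≤ Cq)
    (Kf Kr Kq : NNReal)
    (hfl : LipschitzWith Kf (fun p : EuclideanSpace ℝ (Fin n) × EuclideanSpace ℝ (Fin m) => f p.1 p.2))
    (hrl : LipschitzWith Kr (fun p : EuclideanSpace ℝ (Fin n) × EuclideanSpace ℝ (Fin m) => r p.1 p.2))
    (hql : LipschitzWith Kq q) :
    ∃ L : ℝ, ∀ (x x' : EuclideanSpace ℝ (Fin n)) (u u' : EuclideanSpace ℝ (Fin m)) (t t' : ℝ),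
      t ∈ Set.Icc 0 T → t' ∈ Set.Icc 0 T →
      |Qfun f r q M T x u t - Qfun f r q M T x' u' t'| ≤
        L * (‖x - x'‖ + ‖u - u'‖ + |t - t'|) := by
  refine ⟨Cr + Kr * T + (Kr * T + Kq) * ((1 + Cf + Kf * T) * Real.exp (Kf * T)) + (Cr + Kq * Cf),
    fun x x' u u' t t' ht ht' => ?_⟩
  rcases le_total t t' with h | h
  · exact abs_Qfun_sub_Qfun_le hfb hrb hqb hfl hrl hql ht.1 h ht'.2 x x' u u'
  · rw [abs_sub_comm, norm_sub_rev x, norm_sub_rev u, abs_sub_comm t]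
    exact abs_Qfun_sub_Qfun_le hfb hrb hqb hfl hrl hql ht'.1 h ht.2 x' x u' u

/-- **Lipschitz continuity of the Q-function** under (A1) and (A2): there is a constant `L`
such that `|Q(x,u,t) − Q(x',u',t')| ≤ L (|x − x'| + |u − u'| + |t − t'|)` on
`ℝⁿ × ℝᵐ × [0, T]`. -/
theorem Qfun_lipschitz {n m : ℕ}
    (f : EuclideanSpace ℝ (Fin n) → EuclideanSpace ℝ (Fin m) → EuclideanSpace ℝ (Fin n))
    (r : EuclideanSpace ℝ (Fin n) → EuclideanSpace ℝ (Fin m) → ℝ)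
    (q : EuclideanSpace ℝ (Fin n) → ℝ) (M T : ℝ) (hM : 0 < M) (hT : 0 < T)
    (Cf Cr Cq : ℝ)
    (hfb : ∀ x u, ‖f x u‖ ≤ Cf) (hrb : ∀ x u, |r x u| ≤ Cr) (hqb : ∀ x, |q x| ≤ Cq)
    (Kf Kr Kq : NNReal)
    (hfl : LipschitzWith Kf (fun p : EuclideanSpace ℝ (Fin n) × EuclideanSpace ℝ (Fin m) => f p.1 p.2))
    (hrl : LipschitzWith Kr (fun p : EuclideanSpace ℝ (Fin n) × EuclideanSpace ℝ (Fin m) => r p.1 p.2))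
    (hql : LipschitzWith Kq q) :
    ∃ L : ℝ, ∀ (x x' : EuclideanSpace ℝ (Fin n)) (u u' : EuclideanSpace ℝ (Fin m)) (t t' : ℝ),
      t ∈ Set.Icc 0 T → t' ∈ Set.Icc 0 T →
      |Qfun f r q M T x u t - Qfun f r q M T x' u' t'| ≤
        L * (‖x - x'‖ + ‖u - u'‖ + |t - t'|) :=
  Qfun_lipschitz_general f r q M T Cf Cr Cq hfb hrb hqb Kf Kr Kq hfl hrl hql

end
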